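/- A finite word w is rich if and only if, for each non-empty factor v of w, every factor of w that begins with v, ends with the reversal of v, and contains no occurrence of v or of the reversal of v other than these two, is a palindrome. -/

import Mathlib

/-- The finset of (distinct) palindromic factors of a finite word `w`,
including the empty word. -/
def palFactors {A : Type*} [DecidableEq A] (w : List A) : Finset (List A) :=
  ((w.inits.flatMap List.tails).filter (fun u => u.reverse = u)).toFinset

/-- A finite word `w` is rich if it has exactly `|w| + 1` distinct palindromic factors. -/
def Rich {A : Type*} [DecidableEq A] (w : List A) : Prop :=
  (palFactors w).card = w.length + 1

/-!
Growing a word letter by letter, the only palindrome that can be new is the longest palindromic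
suffix, so `w` is rich iff at every step that suffix is unioccurrent in the prefix read so far.

If `w` is rich and `z` runs from `v` to `v.reverse`, compare `z` with the longest palindromic
suffix `p` of the shortest prefix of `w` ending with `z`: `p` cannot be shorter than `z` (it would
reappear at the start of `z`), equal means `z = p`, and longer means `z.reverse` ends earlier in
`w`, where it satisfies the same hypotheses. Conversely, if the longest palindromic suffix `q` of
`u ++ [a]` also occurs in `u`, the factor from its last earlier occurrence to the end runs from `q`
to `q` without other occurrences, so by hypothesis it is a palindromic suffix longer than `q`.
-/

section Words

variable {A : Type*}

theorem reverse_prefix_of_suffix_of_reverse_eq {q p : List A} (hp : p.reverse = p)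
    (h : q <:+ p) : q.reverse <+: p :=
  hp ▸ List.reverse_prefix.mpr h

theorem infix_of_prefix_of_suffix_concat {q z w : List A} {a : A} (hq : q <+: z)
    (hlt : q.length < z.length) (hz : z <:+ w ++ [a]) : q <:+: w := by
  obtain ⟨r, rfl⟩ := hq
  obtain ⟨s, hs⟩ := hz
  rcases List.eq_nil_or_concat r with rfl | ⟨r', b, rfl⟩
  · simp at hlt
  rw [List.concat_eq_append] at hs
  have hw : (s ++ q ++ r') ++ [b] = w ++ [a] := by simpa using hs
  exact ⟨s, r', (List.append_inj' hw rfl).1⟩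

theorem exists_suffix_with_prefix_without_inner_occurrence {q z : List A} (hq : q <+: z)
    (hlt : q.length < z.length) :
    ∃ z', z' <:+ z ∧ q <+: z' ∧ q.length < z'.length ∧
      ∀ s t, z' = s ++ q ++ t → s = [] ∨ t = [] := by
  by_cases hocc : ∀ s t, z = s ++ q ++ t → s = [] ∨ t = []
  · exact ⟨z, List.suffix_refl z, hq, hlt, hocc⟩
  push Not at hocc
  obtain ⟨s, t, hz, hs, ht⟩ := hocc
  have : q.length + t.length < z.length := by simpa [hz] using List.length_pos_iff.mpr hs
  obtain ⟨z', hz', hqz', hlt', hocc'⟩ := exists_suffix_with_prefix_without_inner_occurrence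
    (List.prefix_append q t) (by simpa using List.length_pos_iff.mpr ht)
  exact ⟨z', hz'.trans ⟨s, by rw [hz, List.append_assoc]⟩, hqz', hlt', hocc'⟩
termination_by z.length

end Words

section LongestPalSuffix

variable {A : Type*}

def longestPalSuffix [DecidableEq A] : List A → List A
  | [] => []
  | a :: u => if (a :: u).reverse = a :: u then a :: u else longestPalSuffix u

variable [DecidableEq A]

theorem longestPalSuffix_suffix (u : List A) : longestPalSuffix u <:+ u := by
  induction u with
  | nil => exact List.suffix_refl _
  | cons a u ih =>
    rw [longestPalSuffix]
    split
    · exact List.suffix_refl _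
    · exact ih.trans (List.suffix_cons a u)

theorem reverse_longestPalSuffix (u : List A) :
    (longestPalSuffix u).reverse = longestPalSuffix u := by
  induction u with
  | nil => rfl
  | cons a u ih =>
    rw [longestPalSuffix]
    split <;> assumption

theorem length_le_longestPalSuffix {u t : List A} (ht : t <:+ u) (hpal : t.reverse = t) :
    t.length ≤ (longestPalSuffix u).length := by
  induction u with
  | nil => simp [List.suffix_nil.mp ht]
  | cons a u ih =>
    rw [longestPalSuffix]
    rcases List.suffix_cons_iff.mp ht with rfl | ht
    · rw [if_pos hpal]
    · split
      · exact ht.length_le.trans (Nat.le_succ _)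
      · exact ih ht

theorem suffix_longestPalSuffix {u t : List A} (ht : t <:+ u) (hpal : t.reverse = t) :
    t <:+ longestPalSuffix u :=
  List.suffix_of_suffix_length_le ht (longestPalSuffix_suffix u)
    (length_le_longestPalSuffix ht hpal)

end LongestPalSuffix

section Richness

variable {A : Type*} [DecidableEq A]

theorem mem_palFactors {w u : List A} : u ∈ palFactors w ↔ u <:+: w ∧ u.reverse = u := by
  simp only [palFactors, List.mem_toFinset, List.mem_filter, List.mem_flatMap, List.mem_inits,
    List.mem_tails, decide_eq_true_eq]
  constructor
  · rintro ⟨⟨p, hp, hu⟩, hpal⟩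
    exact ⟨hu.isInfix.trans hp.isInfix, hpal⟩
  · rintro ⟨⟨s, t, hst⟩, hpal⟩
    exact ⟨⟨s ++ u, ⟨t, hst⟩, ⟨s, rfl⟩⟩, hpal⟩

theorem palFactors_concat_subset (w : List A) (a : A) :
    palFactors (w ++ [a]) ⊆ insert (longestPalSuffix (w ++ [a])) (palFactors w) := by
  intro q hq
  obtain ⟨hinf, hpal⟩ := mem_palFactors.mp hq
  rw [Finset.mem_insert, mem_palFactors]
  rcases List.infix_concat_iff.mp hinf with hsuf | hinf
  · have hqp := suffix_longestPalSuffix hsuf hpal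
    rcases hqp.length_le.eq_or_lt with hlen | hlt
    · exact Or.inl (hqp.eq_of_length hlen)
    · have hpre : q <+: longestPalSuffix (w ++ [a]) := by
        simpa [hpal] using reverse_prefix_of_suffix_of_reverse_eq
          (reverse_longestPalSuffix _) hqp
      exact Or.inr ⟨infix_of_prefix_of_suffix_concat hpre hlt (longestPalSuffix_suffix _), hpal⟩
  · exact Or.inr ⟨hinf, hpal⟩

theorem card_palFactors_append_le (p x : List A) :
    (palFactors (p ++ x)).card ≤ (palFactors p).card + x.length := by
  induction x using List.reverseRecOn with
  | nil => simp
  | append_singleton x a ih =>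
    calc (palFactors (p ++ (x ++ [a]))).card
        ≤ (insert (longestPalSuffix (p ++ x ++ [a])) (palFactors (p ++ x))).card := by
          rw [← List.append_assoc]; exact Finset.card_le_card (palFactors_concat_subset _ a)
      _ ≤ (palFactors (p ++ x)).card + 1 := Finset.card_insert_le _ _
      _ ≤ (palFactors p).card + (x ++ [a]).length := by simp; omega

theorem card_palFactors_le (w : List A) : (palFactors w).card ≤ w.length + 1 := by
  have hnil : (palFactors ([] : List A)).card = 1 := rfl
  simpa [hnil, add_comm] using card_palFactors_append_le [] w

theorem Rich.of_prefix {u p : List A} (hu : Rich u) (hp : p <+: u) : Rich p := by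
  obtain ⟨x, rfl⟩ := hp
  have h₁ := card_palFactors_append_le p x
  have h₂ := card_palFactors_le p
  rw [Rich, List.length_append] at hu
  rw [Rich]
  omega

theorem rich_concat_iff {w : List A} {a : A} :
    Rich (w ++ [a]) ↔ Rich w ∧ ¬ longestPalSuffix (w ++ [a]) <:+: w := by
  have hsub := Finset.card_le_card (palFactors_concat_subset w a)
  have hins := Finset.card_insert_le (longestPalSuffix (w ++ [a])) (palFactors w)
  have hw := card_palFactors_le w
  have hwa := card_palFactors_le (w ++ [a])
  simp only [Rich, List.length_append, List.length_singleton] at hwa ⊢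
  constructor
  · intro hrich
    refine ⟨by omega, fun hinf => ?_⟩
    have hmem := mem_palFactors.mpr ⟨hinf, reverse_longestPalSuffix (w ++ [a])⟩
    rw [Finset.insert_eq_self.mpr hmem] at hsub
    omega
  · rintro ⟨hrich, hnew⟩
    have hnot : longestPalSuffix (w ++ [a]) ∉ palFactors w := fun h => hnew (mem_palFactors.mp h).1
    have hsup : insert (longestPalSuffix (w ++ [a])) (palFactors w) ⊆ palFactors (w ++ [a]) := by
      refine Finset.insert_subset (mem_palFactors.mpr ⟨(longestPalSuffix_suffix _).isInfix,
        reverse_longestPalSuffix _⟩) fun q hq => ?_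
      obtain ⟨hq, hpal⟩ := mem_palFactors.mp hq
      exact mem_palFactors.mpr ⟨hq.trans (List.prefix_append w [a]).isInfix, hpal⟩
    have := Finset.card_le_card hsup
    rw [Finset.card_insert_of_notMem hnot] at this
    omega

theorem Rich.length_le_of_longestPalSuffix_prefix {u z : List A} (hu : Rich u) (hz : z <:+ u)
    (hp : longestPalSuffix u <+: z) : z.length ≤ (longestPalSuffix u).length := by
  by_contra! hlt
  rcases List.eq_nil_or_concat u with rfl | ⟨u', b, rfl⟩
  · simp [List.suffix_nil.mp hz] at hlt
  · rw [List.concat_eq_append] at hu hz hp hlt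
    exact (rich_concat_iff.mp hu).2 (infix_of_prefix_of_suffix_concat hp hlt hz)

end Richness

section ReversalReturn

variable {A : Type*}

def IsReversalReturn (v z : List A) : Prop :=
  v <+: z ∧ v.reverse <:+ z ∧
    (∀ s t, z = s ++ v ++ t → s = [] ∨ (t = [] ∧ v.reverse = v)) ∧
    (∀ s t, z = s ++ v.reverse ++ t → t = [] ∨ (s = [] ∧ v.reverse = v))

namespace IsReversalReturn

variable {v z : List A}

theorem of_reverse_eq (hv : v.reverse = v) (hpre : v <+: z) (hsuf : v <:+ z)
    (hocc : ∀ s t, z = s ++ v ++ t → s = [] ∨ t = []) : IsReversalReturn v z := by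
  refine ⟨hpre, by rwa [hv], fun s t h => (hocc s t h).imp_right (⟨·, hv⟩), fun s t h => ?_⟩
  rw [hv] at h
  exact (hocc s t h).symm.imp_right (⟨·, hv⟩)

theorem reverse (h : IsReversalReturn v z) : IsReversalReturn v z.reverse := by
  obtain ⟨hpre, hsuf, hocc, hocc_rev⟩ := h
  refine ⟨by simpa using List.reverse_prefix.mpr hsuf, List.reverse_suffix.mpr hpre,
    fun s t h => ?_, fun s t h => ?_⟩
  · simpa using hocc_rev t.reverse s.reverse (by simpa using congrArg List.reverse h)
  · simpa [and_comm] using hocc t.reverse s.reverse (by simpa using congrArg List.reverse h)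

theorem prefix_of_suffix_of_reverse_eq {p : List A} (h : IsReversalReturn v z)
    (hp : p.reverse = p) (hpz : p <:+ z) (hlt : p.length < z.length) : p <+: z := by
  obtain ⟨hpre, hsuf, hocc, -⟩ := h
  rcases le_total v.length p.length with hvp | hpv
  · obtain ⟨r, hr⟩ : v <+: p := by
      simpa using reverse_prefix_of_suffix_of_reverse_eq hp
        (List.suffix_of_suffix_length_le hsuf hpz (by simpa using hvp))
    obtain ⟨s, hs⟩ := hpz
    have hs_ne : s ≠ [] := by
      rintro rfl
      simp [← hs] at hlt
    rcases hocc s r (by rw [← hs, ← hr, List.append_assoc]) with hs_nil | ⟨rfl, -⟩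
    · exact absurd hs_nil hs_ne
    · simpa [← hr] using hpre
  · have hpv' : p <:+ v.reverse :=
      List.suffix_of_suffix_length_le hpz hsuf (by simpa using hpv)
    have : p <+: v := by simpa [hp] using List.reverse_prefix.mpr hpv'
    exact this.trans hpre

variable [DecidableEq A]

theorem reverse_eq_self_of_rich {u : List A} (hu : Rich u) (hz : z <:+ u)
    (h : IsReversalReturn v z) : z.reverse = z := by
  induction hn : u.length using Nat.strong_induction_on generalizing u z with
  | _ n ih =>
  have hp := longestPalSuffix_suffix u
  have hpal := reverse_longestPalSuffix u
  rcases lt_trichotomy (longestPalSuffix u).length z.length with hlt | heq | hgt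
  · have hpz := List.suffix_of_suffix_length_le hp hz hlt.le
    have := hu.length_le_of_longestPalSuffix_prefix hz
      (h.prefix_of_suffix_of_reverse_eq hpal hpz hlt)
    omega
  · rwa [(List.suffix_of_suffix_length_le hz hp heq.ge).eq_of_length heq.symm]
  · obtain ⟨r, hr⟩ := reverse_prefix_of_suffix_of_reverse_eq hpal
      (List.suffix_of_suffix_length_le hz hp hgt.le)
    obtain ⟨u₂, hu₂⟩ := hp
    have hrich : Rich (u₂ ++ z.reverse) :=
      hu.of_prefix ⟨r, by rw [List.append_assoc, hr, hu₂]⟩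
    have hlen : (u₂ ++ z.reverse).length < n := by
      rw [← hn, ← hu₂, ← hr]
      simp only [List.length_append, List.length_reverse]
      simp only [← hr, List.length_append, List.length_reverse] at hgt
      omega
    simpa using (ih _ hlen hrich (List.suffix_append u₂ _) h.reverse rfl).symm

end IsReversalReturn

theorem rich_of_forall_isReversalReturn [DecidableEq A] {w : List A}
    (H : ∀ v z, v ≠ [] → z <:+: w → IsReversalReturn v z → z.reverse = z) : Rich w := by
  induction w using List.reverseRecOn with
  | nil => rfl
  | append_singleton u a ih =>
    refine rich_concat_iff.mpr
      ⟨ih fun v z hv hz => H v z hv (hz.trans (List.prefix_append u [a]).isInfix), ?_⟩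
    rintro ⟨s, t, hst⟩
    set q := longestPalSuffix (u ++ [a])
    have hq_suf : q <:+ u ++ [a] := longestPalSuffix_suffix _
    have hq_pal : q.reverse = q := reverse_longestPalSuffix _
    have hq_ne : q ≠ [] := List.ne_nil_of_length_pos
      (length_le_longestPalSuffix (List.suffix_append u [a]) rfl)
    obtain ⟨z, hz, hqz, hlt, hocc⟩ := exists_suffix_with_prefix_without_inner_occurrence
      (List.prefix_append q (t ++ [a])) (by simp)
    have hz_suf : z <:+ u ++ [a] := hz.trans ⟨s, by rw [← hst]; simp⟩
    have hz_pal := H q z hq_ne hz_suf.isInfix <| IsReversalReturn.of_reverse_eq hq_pal hqz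
      (List.suffix_of_suffix_length_le hq_suf hz_suf hlt.le) hocc
    exact absurd (length_le_longestPalSuffix hz_suf hz_pal) (not_le.mpr hlt)

end ReversalReturn

/-- A finite word `w` is rich if and only if, for each non-empty factor `v` of `w`,
every factor `z` of `w` that begins with `v`, ends with the reversal of `v`, and
contains no occurrence of `v` or of the reversal of `v` other than these two,
is a palindrome.  (An occurrence of `v` at the end of `z`, or of `v.reverse` at the
beginning of `z`, is "one of these two" only when `v` is itself a palindrome, so that
it coincides with the prescribed suffix occurrence of `v.reverse`, resp. the
prescribed prefix occurrence of `v`.) -/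
theorem rich_iff_factors_from_v_to_reverse_palindromic {A : Type*} [DecidableEq A]
    (w : List A) :
    Rich w ↔ ∀ v : List A, v <:+: w → v ≠ [] →
      ∀ z : List A, z <:+: w → v <+: z → v.reverse <:+ z →
        (∀ s t : List A, z = s ++ v ++ t → s = [] ∨ (t = [] ∧ v.reverse = v)) →
        (∀ s t : List A, z = s ++ v.reverse ++ t → t = [] ∨ (s = [] ∧ v.reverse = v)) →
        z.reverse = z := by
  constructor
  · rintro hw v - - z ⟨s, t, rfl⟩ hpre hsuf hocc hocc_rev
    exact IsReversalReturn.reverse_eq_self_of_rich (hw.of_prefix (List.prefix_append _ t))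
      (List.suffix_append s z) ⟨hpre, hsuf, hocc, hocc_rev⟩
  · intro H
    exact rich_of_forall_isReversalReturn fun v z hv hz ⟨hpre, hsuf, hocc, hocc_rev⟩ =>
      H v (hpre.isInfix.trans hz) hv z hz hpre hsuf hocc hocc_rev
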